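/- (Graded uniqueness theorem) Let k be a positive integer, Λ a finitely aligned k-graph, R a commutative ring with 1, and let KP_R(Λ) with Kumjian-Pask Λ-family {s_λ, s_{μ*}} be the universal Kumjian-Pask algebra of Λ over R, graded over ℤ^k by KP_R(Λ)_n := span_R{s_λ s_{μ*} : d(λ) − d(μ) = n}. Let A be a ℤ^k-graded R-algebra and suppose π : KP_R(Λ) → A is a ℤ^k-graded R-algebra homomorphism such that π(r s_v) ≠ 0 for all r ∈ R\{0} and all v ∈ Λ^0. Then π is injective. -/

import Mathlib

/-!
A map out of `KP_R(Λ)` respecting the `ℤᵏ`-gradings is injective as soon as it kills no nonzero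
homogeneous element, so it suffices that the ideal generated by a nonzero homogeneous
`x = ∑ rᵢ s_{μᵢ} s_{νᵢ*}` of degree `n` contains some `r s_v` with `r ≠ 0`.
Close the `μᵢ` and their range vertices under minimal common extensions to a finite set `E`
(finite alignment), and pick `λ ∈ E` of maximal degree with `s_{λ*} x ≠ 0`. By maximality
`s_{λ*} x` is fixed by the (KP4)-product `G` over the nontrivial tails `σ` with `λσ ∈ E`, and `G`
kills every term of `s_{λ*} x` except those of the form `G s_{δ*}` with `d(δ) = d(λ) - n`.
These `s_{δ*}` act as matrix units, so `s_{λ*} x s_δ = r G ≠ 0` for some `δ` and `r`.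
Now (KP4) says the tails are not exhaustive, and a path `η` with no common extension with any of
them gives `s_{η*} s_{λ*} x s_δ s_η = r s_{s(η)}`.
-/

/-- A higher-rank graph (`k`-graph): a countable small category together with a degree
functor `d` into `ℕᵏ` satisfying the unique factorisation property.  The morphisms form the
type `Path`; the objects (vertices) are identified with the identity paths via `vertex`.
Composition `comp p q` is only meaningful when `src p = rng q`; all axioms are stated under
this compatibility assumption. -/
structure KGraph (k : ℕ) where
  Obj : Type
  Path : Type
  countable_obj : Countable Obj
  countable_path : Countable Path
  src : Path → Obj
  rng : Path → Obj
  vertex : Obj → Path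
  comp : Path → Path → Path
  deg : Path → Fin k → ℕ
  src_vertex : ∀ v, src (vertex v) = v
  rng_vertex : ∀ v, rng (vertex v) = v
  deg_vertex : ∀ v, deg (vertex v) = 0
  vertex_comp : ∀ p, comp (vertex (rng p)) p = p
  comp_vertex : ∀ p, comp p (vertex (src p)) = p
  src_comp : ∀ p q, src p = rng q → src (comp p q) = src q
  rng_comp : ∀ p q, src p = rng q → rng (comp p q) = rng p
  deg_comp : ∀ p q, src p = rng q → deg (comp p q) = deg p + deg q
  comp_assoc : ∀ p q r, src p = rng q → src q = rng r →
    comp (comp p q) r = comp p (comp q r)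
  factorisation : ∀ (p : Path) (m n : Fin k → ℕ), deg p = m + n →
    ∃! x : Path × Path, src x.1 = rng x.2 ∧ deg x.1 = m ∧ deg x.2 = n ∧
      comp x.1 x.2 = p

namespace KGraph

variable {k : ℕ} (Λ : KGraph k)

/-- `Λ^min(p,q)`: the pairs `(ρ,τ)` with `pρ = qτ` a minimal common extension of `p` and `q`. -/
def minPairs (p q : Λ.Path) : Set (Λ.Path × Λ.Path) :=
  {x | Λ.src p = Λ.rng x.1 ∧ Λ.src q = Λ.rng x.2 ∧
    Λ.comp p x.1 = Λ.comp q x.2 ∧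
    Λ.deg (Λ.comp p x.1) = Λ.deg p ⊔ Λ.deg q}

/-- `MCE(p,q)`: minimal common extensions of `p` and `q`. -/
def MCE (p q : Λ.Path) : Set Λ.Path :=
  {t | Λ.deg t = Λ.deg p ⊔ Λ.deg q ∧
    (∃ r, Λ.src p = Λ.rng r ∧ Λ.comp p r = t) ∧
    (∃ r, Λ.src q = Λ.rng r ∧ Λ.comp q r = t)}

/-- `Λ` is finitely aligned if all the sets `Λ^min(p,q)` are finite. -/
def FinitelyAligned : Prop := ∀ p q, (Λ.minPairs p q).Finite

/-- `E ⊆ vΛ` is exhaustive. -/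
def Exhaustive (v : Λ.Obj) (E : Set Λ.Path) : Prop :=
  ∀ p, Λ.rng p = v → ∃ q ∈ E, (Λ.minPairs p q).Nonempty

/-- `E` is a finite exhaustive subset of `vΛ \ {v}`, i.e. an element of `FE(Λ)`
with range vertex `v`. -/
def FE (v : Λ.Obj) (E : Set Λ.Path) : Prop :=
  E.Finite ∧ (∀ p ∈ E, Λ.rng p = v ∧ p ≠ Λ.vertex v) ∧ Λ.Exhaustive v E

/-- `Ext(p; E)`. -/
def extSet (p : Λ.Path) (E : Set Λ.Path) : Set Λ.Path :=
  ⋃ q ∈ E, {r | ∃ t, (r, t) ∈ Λ.minPairs p q}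

section Family

variable {A : Type} [NonUnitalRing A]

/-- (KP1): the vertex elements are mutually orthogonal idempotents. -/
def KP1 (S : Λ.Path → A) : Prop :=
  (∀ v, S (Λ.vertex v) * S (Λ.vertex v) = S (Λ.vertex v)) ∧
  ∀ v w, v ≠ w → S (Λ.vertex v) * S (Λ.vertex w) = 0

/-- (KP2): multiplicativity on composable paths and ghost paths.  Here `T μ` plays the
role of `S_{μ*}`. -/
def KP2 (S T : Λ.Path → A) : Prop :=
  ∀ p q, Λ.src p = Λ.rng q →
    S p * S q = S (Λ.comp p q) ∧ T q * T p = T (Λ.comp p q)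

/-- (KP3): `S_{p*} S_q = ∑_{(ρ,τ) ∈ Λ^min(p,q)} S_ρ S_{τ*}` (empty sum read as `0`). -/
def KP3 (S T : Λ.Path → A) : Prop :=
  ∀ p q, T p * S q = ∑ᶠ x ∈ Λ.minPairs p q, S x.1 * T x.2

/-- (KP4): `∏_{p ∈ E} (S_v - S_p S_{p*}) = 0` for every finite exhaustive
`E ⊆ vΛ \ {v}`.  The product is implemented as a fold over any duplicate-free list
enumerating `E`, with the harmless extra idempotent factor `S_v` in front. -/
def KP4 (S T : Λ.Path → A) : Prop :=
  ∀ (v : Λ.Obj) (l : List Λ.Path), l.Nodup → Λ.FE v {p | p ∈ l} →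
    (l.map fun p => S (Λ.vertex v) - S p * T p).foldl (· * ·) (S (Λ.vertex v)) = 0

/-- A Kumjian–Pask `Λ`-family in a (not necessarily unital) ring: `S p` represents `s_p`
and `T p` represents the ghost element `s_{p*}`, with `T` and `S` agreeing on vertices. -/
def IsKPFamily (S T : Λ.Path → A) : Prop :=
  (∀ v, T (Λ.vertex v) = S (Λ.vertex v)) ∧
  Λ.KP1 S ∧ Λ.KP2 S T ∧ Λ.KP3 S T ∧ Λ.KP4 S T

end Family

/-- `(B, s, t)` is *the* (universal) Kumjian–Pask algebra of `Λ` over `R`: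
`(s, t)` is a Kumjian–Pask `Λ`-family generating `B`, and every Kumjian–Pask `Λ`-family
in an `R`-algebra `A` factors uniquely through it. -/
def IsUniversalKP (R : Type) [CommRing R] (B : Type) [NonUnitalRing B]
    [Module R B] [SMulCommClass R B B] [IsScalarTower R B B]
    (s t : Λ.Path → B) : Prop :=
  Λ.IsKPFamily s t ∧
  NonUnitalAlgebra.adjoin R (Set.range s ∪ Set.range t) = ⊤ ∧
  ∀ (A : Type) [NonUnitalRing A] [Module R A] [SMulCommClass R A A]
    [IsScalarTower R A A] (S T : Λ.Path → A), Λ.IsKPFamily S T →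
      ∃! π : B →ₙₐ[R] A, (∀ p, π (s p) = S p) ∧ (∀ p, π (t p) = T p)

/-- A boundary path of `Λ`: a degree-preserving functor `x : Ω_{k,m} → Λ`
(for `m = deg x ∈ (ℕ∪{∞})ᵏ`), recorded via its segments `seg p q = x(p,q)`
for `p ≤ q ≤ m` (the value of `seg` outside this domain is junk), and satisfying
the boundary-path condition with respect to finite exhaustive sets. -/
structure BoundaryPath (Λ : KGraph k) where
  deg : Fin k → ℕ∞
  seg : (Fin k → ℕ) → (Fin k → ℕ) → Λ.Path
  deg_seg : ∀ p q, p ≤ q → (∀ i, (q i : ℕ∞) ≤ deg i) → Λ.deg (seg p q) = q - p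
  seg_self : ∀ p, (∀ i, (p i : ℕ∞) ≤ deg i) →
    seg p p = Λ.vertex (Λ.src (seg p p))
  src_seg : ∀ p q r, p ≤ q → q ≤ r → (∀ i, (r i : ℕ∞) ≤ deg i) →
    Λ.src (seg p q) = Λ.rng (seg q r)
  comp_seg : ∀ p q r, p ≤ q → q ≤ r → (∀ i, (r i : ℕ∞) ≤ deg i) →
    Λ.comp (seg p q) (seg q r) = seg p r
  boundary : ∀ n : Fin k → ℕ, (∀ i, (n i : ℕ∞) ≤ deg i) →
    ∀ E : Set Λ.Path, Λ.FE (Λ.src (seg n n)) E →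
      ∃ p ∈ E, (∀ i, ((n + Λ.deg p) i : ℕ∞) ≤ deg i) ∧ seg n (n + Λ.deg p) = p

namespace BoundaryPath

variable {Λ : KGraph k}

/-- The vertex `x(n)` of a boundary path. -/
def vtx (x : Λ.BoundaryPath) (n : Fin k → ℕ) : Λ.Obj := Λ.src (x.seg n n)

/-- The range `r(x) = x(0)` of a boundary path. -/
def rng (x : Λ.BoundaryPath) : Λ.Obj := x.vtx 0

end BoundaryPath

/-- `IsShift n x y` says that `y = σⁿ x` is the shift of the boundary path `x` by
`n ≤ d(x)`. -/
def IsShift (n : Fin k → ℕ) (x y : Λ.BoundaryPath) : Prop :=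
  (∀ i, (n i : ℕ∞) ≤ x.deg i) ∧
  (∀ i, y.deg i = x.deg i - (n i : ℕ∞)) ∧
  ∀ p q, p ≤ q → (∀ i, (q i : ℕ∞) ≤ y.deg i) → y.seg p q = x.seg (n + p) (n + q)

/-- `IsConcat p x y` says that `y = p·x` is the concatenation of the path `p` with the
boundary path `x` (so `y(0, d p) = p` and `σ^{d p} y = x`). -/
def IsConcat (p : Λ.Path) (x y : Λ.BoundaryPath) : Prop :=
  Λ.IsShift (Λ.deg p) y x ∧ y.seg 0 (Λ.deg p) = p

/-- A boundary path `x` is aperiodic if distinct paths with source `r(x)` give distinct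
concatenations `p·x ≠ q·x`. -/
def AperiodicBP (x : Λ.BoundaryPath) : Prop :=
  ∀ p q, Λ.src p = x.rng → Λ.src q = x.rng → p ≠ q →
    ∀ y, Λ.IsConcat p x y → ¬Λ.IsConcat q x y

/-- `Λ` is aperiodic: every vertex receives an aperiodic boundary path. -/
def Aperiodic : Prop :=
  ∀ v : Λ.Obj, ∃ x : Λ.BoundaryPath, x.rng = v ∧ Λ.AperiodicBP x

/-- `Λ` is cofinal: for every vertex `v` and boundary path `x` there is `n ≤ d(x)`
with `vΛx(n) ≠ ∅`. -/
def Cofinal : Prop :=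
  ∀ (v : Λ.Obj) (x : Λ.BoundaryPath), ∃ n : Fin k → ℕ,
    (∀ i, (n i : ℕ∞) ≤ x.deg i) ∧ ∃ p, Λ.rng p = v ∧ Λ.src p = x.vtx n

/-- The boundary-path groupoid `G_Λ` as a set of triples `(x, m, y)` with
`σᵖ x = σ^q y` and `m = p - q`. -/
def BPG : Set (Λ.BoundaryPath × (Fin k → ℤ) × Λ.BoundaryPath) :=
  {a | ∃ (p q : Fin k → ℕ) (z : Λ.BoundaryPath),
    (fun i => (p i : ℤ) - (q i : ℤ)) = a.2.1 ∧
    Λ.IsShift p a.1 z ∧ Λ.IsShift q a.2.2 z}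

/-- `Z(p) = p ∂Λ`, the cylinder set of boundary paths with prefix `p`. -/
def ZC (p : Λ.Path) : Set Λ.BoundaryPath := {x | ∃ z, Λ.IsConcat p z x}

/-- `Z(p *ₛ q)`. -/
def ZP (p q : Λ.Path) : Set (Λ.BoundaryPath × (Fin k → ℤ) × Λ.BoundaryPath) :=
  {a | a.2.1 = (fun i => (Λ.deg p i : ℤ) - (Λ.deg q i : ℤ)) ∧
    a.1 ∈ Λ.ZC p ∧ a.2.2 ∈ Λ.ZC q ∧
    ∃ z, Λ.IsShift (Λ.deg p) a.1 z ∧ Λ.IsShift (Λ.deg q) a.2.2 z}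

/-- `Z(p *ₛ q \ G)`. -/
def ZPD (p q : Λ.Path) (G : Set Λ.Path) :
    Set (Λ.BoundaryPath × (Fin k → ℤ) × Λ.BoundaryPath) :=
  Λ.ZP p q \ ⋃ ν ∈ G, Λ.ZP (Λ.comp p ν) (Λ.comp q ν)

/-- The boundary-path groupoid `G_Λ` as a type. -/
abbrev bpSpace : Type := {a // a ∈ Λ.BPG}

/-- The topology on `G_Λ` generated by the basic sets `Z(p *ₛ q \ G)` with `G` finite. -/
def bpTop : TopologicalSpace Λ.bpSpace :=
  TopologicalSpace.generateFrom
    {V | ∃ (p q : Λ.Path) (G : Set Λ.Path), Λ.src p = Λ.src q ∧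
      (∀ ν ∈ G, Λ.rng ν = Λ.src p) ∧ G.Finite ∧
      V = Subtype.val ⁻¹' Λ.ZPD p q G}

theorem isShift_zero (x : Λ.BoundaryPath) : Λ.IsShift 0 x x :=
  ⟨fun i => by simp, fun i => by simp, fun p q _ _ => by simp⟩

/-- The unit space `G_Λ^{(0)}` of the boundary-path groupoid. -/
def unitSet : Set Λ.bpSpace := {a | a.1.2.1 = 0 ∧ a.1.1 = a.1.2.2}

/-- The unit `(x, 0, x)` of `G_Λ` corresponding to a boundary path `x`. -/
def unitOf (x : Λ.BoundaryPath) : Λ.bpSpace :=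
  ⟨(x, 0, x), ⟨0, 0, x, by funext i; simp, Λ.isShift_zero x, Λ.isShift_zero x⟩⟩

end KGraph

/-- The degree-`n` component `KP_R(Λ)_n = span_R{s_p t_q : d(p) - d(q) = n}`. -/
def kpComponent {k : ℕ} (Λ : KGraph k) (R : Type) [CommRing R] {B : Type}
    [NonUnitalRing B] [Module R B] (s t : Λ.Path → B) (n : Fin k → ℤ) :
    Submodule R B :=
  Submodule.span R {b | ∃ p q : Λ.Path,
    (fun i => (Λ.deg p i : ℤ) - (Λ.deg q i : ℤ)) = n ∧ b = s p * t q}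


namespace List

variable {M : Type*}

theorem foldl_mul_mul_of_mul_eq [Semigroup M] {y : M} :
    ∀ {a : M} {l : List M}, a * y = y → (∀ b ∈ l, b * y = y) → l.foldl (· * ·) a * y = y
  | _, [], ha, _ => ha
  | a, b :: l, ha, hl => foldl_mul_mul_of_mul_eq (a := a * b) (l := l)
      (by rw [mul_assoc, hl b mem_cons_self, ha]) fun c hc => hl c (mem_cons_of_mem b hc)

theorem mul_foldl_mul_of_mul_eq [Semigroup M] {y : M} :
    ∀ {a : M} {l : List M}, y * a = y → (∀ b ∈ l, y * b = y) → y * l.foldl (· * ·) a = y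
  | _, [], ha, _ => ha
  | a, b :: l, ha, hl => mul_foldl_mul_of_mul_eq (a := a * b) (l := l)
      (by rw [← mul_assoc, ha, hl b mem_cons_self]) fun c hc => hl c (mem_cons_of_mem b hc)

theorem foldl_mul_mul_of_mul_eq_self [Semigroup M] {y : M} :
    ∀ {a : M} {l : List M}, a * y = a → (∀ b ∈ l, b * y = b) →
      l.foldl (· * ·) a * y = l.foldl (· * ·) a
  | _, [], ha, _ => ha
  | a, b :: l, _, hl => foldl_mul_mul_of_mul_eq_self (a := a * b) (l := l)
      (by rw [mul_assoc, hl b mem_cons_self]) fun c hc => hl c (mem_cons_of_mem b hc)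

theorem foldl_mul_mul_eq_zero [SemigroupWithZero M] {e : M} :
    ∀ {a : M} {l : List M}, (∀ b ∈ l, Commute b e) → (a * e = 0 ∨ ∃ b ∈ l, b * e = 0) →
      l.foldl (· * ·) a * e = 0
  | _, [], _, h => by simpa using h
  | a, b :: l, hl, h => by
    refine foldl_mul_mul_eq_zero (a := a * b) (fun c hc => hl c (mem_cons_of_mem b hc)) ?_
    rcases h with ha | ⟨c, hc, hce⟩
    · rw [mul_assoc, (hl b mem_cons_self).eq, ← mul_assoc, ha, zero_mul]
      exact Or.inl rfl
    rcases mem_cons.mp hc with rfl | hc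
    · rw [mul_assoc, hce, mul_zero]
      exact Or.inl rfl
    · exact Or.inr ⟨c, hc, hce⟩

end List

namespace KGraph

variable {k : ℕ}

def IsPrefix (Λ : KGraph k) (μ τ : Λ.Path) : Prop :=
  ∃ σ, Λ.src μ = Λ.rng σ ∧ Λ.comp μ σ = τ

variable {Λ : KGraph k}

theorem isPrefix_comp {μ σ : Λ.Path} (h : Λ.src μ = Λ.rng σ) : Λ.IsPrefix μ (Λ.comp μ σ) :=
  ⟨σ, h, rfl⟩

theorem IsPrefix.refl (μ : Λ.Path) : Λ.IsPrefix μ μ :=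
  ⟨Λ.vertex (Λ.src μ), (Λ.rng_vertex _).symm, Λ.comp_vertex μ⟩

theorem IsPrefix.trans {μ τ ρ : Λ.Path} (h : Λ.IsPrefix μ τ) (h' : Λ.IsPrefix τ ρ) :
    Λ.IsPrefix μ ρ := by
  obtain ⟨σ, hσ, rfl⟩ := h
  obtain ⟨σ', hσ', rfl⟩ := h'
  rw [Λ.src_comp _ _ hσ] at hσ'
  exact ⟨Λ.comp σ σ', by rw [Λ.rng_comp _ _ hσ', hσ], (Λ.comp_assoc _ _ _ hσ hσ').symm⟩

theorem IsPrefix.exists_deg_add {μ τ : Λ.Path} (h : Λ.IsPrefix μ τ) :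
    ∃ σ, Λ.src μ = Λ.rng σ ∧ Λ.comp μ σ = τ ∧ Λ.deg τ = Λ.deg μ + Λ.deg σ := by
  obtain ⟨σ, hσ, rfl⟩ := h
  exact ⟨σ, hσ, rfl, Λ.deg_comp _ _ hσ⟩

theorem eq_vertex_of_deg_eq_zero {p : Λ.Path} (h : Λ.deg p = 0) : p = Λ.vertex (Λ.rng p) := by
  obtain ⟨x, -, hx⟩ := Λ.factorisation p 0 0 (by rw [h, add_zero])
  have h₁ := hx (Λ.vertex (Λ.rng p), p) ⟨Λ.src_vertex _, Λ.deg_vertex _, h, Λ.vertex_comp p⟩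
  have h₂ := hx (p, Λ.vertex (Λ.src p)) ⟨(Λ.rng_vertex _).symm, h, Λ.deg_vertex _, Λ.comp_vertex p⟩
  exact congrArg Prod.fst (h₂.trans h₁.symm)

theorem eq_vertex_src_of_deg_eq_zero {p σ : Λ.Path} (h : Λ.src p = Λ.rng σ)
    (hσ : Λ.deg σ = 0) : σ = Λ.vertex (Λ.src p) :=
  h ▸ eq_vertex_of_deg_eq_zero hσ

theorem comp_eq_self_of_deg_eq_zero {p σ : Λ.Path} (h : Λ.src p = Λ.rng σ)
    (hσ : Λ.deg σ = 0) : Λ.comp p σ = p := by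
  rw [eq_vertex_src_of_deg_eq_zero h hσ, Λ.comp_vertex]

theorem deg_eq_zero_of_deg_comp_eq {p σ : Λ.Path} (h : Λ.src p = Λ.rng σ)
    (hd : Λ.deg (Λ.comp p σ) = Λ.deg p) : Λ.deg σ = 0 := by
  rwa [Λ.deg_comp _ _ h, add_eq_left] at hd

theorem comp_left_cancel {μ σ σ' : Λ.Path} (h : Λ.src μ = Λ.rng σ) (h' : Λ.src μ = Λ.rng σ')
    (hc : Λ.comp μ σ = Λ.comp μ σ') : σ = σ' := by
  have hd : Λ.deg σ = Λ.deg σ' :=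
    add_left_cancel ((Λ.deg_comp _ _ h).symm.trans (hc ▸ Λ.deg_comp _ _ h'))
  obtain ⟨x, -, hx⟩ := Λ.factorisation (Λ.comp μ σ) (Λ.deg μ) (Λ.deg σ) (Λ.deg_comp _ _ h)
  have h₁ := hx (μ, σ) ⟨h, rfl, rfl, rfl⟩
  have h₂ := hx (μ, σ') ⟨h', rfl, hd.symm, hc.symm⟩
  exact congrArg Prod.snd (h₁.trans h₂.symm)

theorem IsPrefix.eq_of_deg_eq {μ τ : Λ.Path} (h : Λ.IsPrefix μ τ) (hd : Λ.deg τ = Λ.deg μ) :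
    τ = μ := by
  obtain ⟨σ, hσ, rfl⟩ := h
  exact comp_eq_self_of_deg_eq_zero hσ (deg_eq_zero_of_deg_comp_eq hσ hd)

/-- Prefixes of a path are determined by their degrees. -/
theorem IsPrefix.of_deg_le {b σ τ : Λ.Path} (hb : Λ.IsPrefix b τ) (hσ : Λ.IsPrefix σ τ)
    (hd : Λ.deg b ≤ Λ.deg σ) : Λ.IsPrefix b σ := by
  obtain ⟨ξ, hξ, hbτ, hdb⟩ := hb.exists_deg_add
  obtain ⟨ρ, hρ, hστ, hdσ⟩ := hσ.exists_deg_add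
  obtain ⟨⟨ξ₁, ξ₂⟩, ⟨h₁₂, hd₁, hd₂, hcomp⟩, -⟩ :=
    Λ.factorisation ξ (Λ.deg σ - Λ.deg b) (Λ.deg ρ) (by
      funext i
      have := congrFun hdb i
      have := congrFun hdσ i
      have := hd i
      simp only [Pi.add_apply, Pi.sub_apply] at *
      omega)
  dsimp only at h₁₂ hd₁ hd₂ hcomp
  subst hcomp
  have hb₁ : Λ.src b = Λ.rng ξ₁ := by rwa [Λ.rng_comp _ _ h₁₂] at hξ
  obtain ⟨x, -, hx⟩ := Λ.factorisation τ (Λ.deg σ) (Λ.deg ρ) (hστ ▸ Λ.deg_comp _ _ hρ)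
  have e₁ := hx (σ, ρ) ⟨hρ, rfl, rfl, hστ⟩
  have e₂ := hx (Λ.comp b ξ₁, ξ₂) ⟨by rw [Λ.src_comp _ _ hb₁, h₁₂],
    by rw [Λ.deg_comp _ _ hb₁, hd₁, add_tsub_cancel_of_le hd], hd₂,
    by rw [Λ.comp_assoc _ _ _ hb₁ h₁₂, hbτ]⟩
  exact ⟨ξ₁, hb₁, congrArg Prod.fst (e₂.trans e₁.symm)⟩

theorem minPairs_self (p : Λ.Path) :
    Λ.minPairs p p = {(Λ.vertex (Λ.src p), Λ.vertex (Λ.src p))} := by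
  ext ⟨ρ, τ⟩
  simp only [minPairs, Set.mem_ofPred_eq, Set.mem_singleton_iff, Prod.mk.injEq, sup_idem]
  constructor
  · rintro ⟨hρ, hτ, hc, hd⟩
    have hρ₀ := deg_eq_zero_of_deg_comp_eq hρ hd
    have hτ₀ : Λ.deg τ = 0 :=
      deg_eq_zero_of_deg_comp_eq hτ (by rw [← hc, comp_eq_self_of_deg_eq_zero hρ hρ₀])
    exact ⟨eq_vertex_src_of_deg_eq_zero hρ hρ₀, eq_vertex_src_of_deg_eq_zero hτ hτ₀⟩
  · rintro ⟨rfl, rfl⟩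
    exact ⟨(Λ.rng_vertex _).symm, (Λ.rng_vertex _).symm, rfl, by rw [Λ.comp_vertex]⟩

theorem minPairs_eq_empty_of_deg_eq {p q : Λ.Path} (hd : Λ.deg p = Λ.deg q) (hne : p ≠ q) :
    Λ.minPairs p q = ∅ := by
  refine Set.eq_empty_of_forall_notMem fun ⟨ρ, τ⟩ ⟨hρ, hτ, hc, hdeg⟩ => hne ?_
  rw [← hd, sup_idem] at hdeg
  have hp := comp_eq_self_of_deg_eq_zero hρ (deg_eq_zero_of_deg_comp_eq hρ hdeg)
  have hq := comp_eq_self_of_deg_eq_zero hτ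
    (deg_eq_zero_of_deg_comp_eq hτ (by rw [← hc, hdeg, hd]))
  rw [← hp, hc, hq]

theorem swap_mem_minPairs {p q : Λ.Path} {x : Λ.Path × Λ.Path} (hx : x ∈ Λ.minPairs p q) :
    x.swap ∈ Λ.minPairs q p := by
  obtain ⟨hρ, hτ, hc, hd⟩ := hx
  exact ⟨hτ, hρ, hc.symm, by rw [Prod.fst_swap, ← hc, hd, sup_comm]⟩

theorem comp_mem_MCE {p q : Λ.Path} {x : Λ.Path × Λ.Path} (hx : x ∈ Λ.minPairs p q) :
    Λ.comp p x.1 ∈ Λ.MCE p q :=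
  ⟨hx.2.2.2, isPrefix_comp hx.1, ⟨x.2, hx.2.1, hx.2.2.1.symm⟩⟩

theorem finite_MCE (hΛ : Λ.FinitelyAligned) (p q : Λ.Path) : (Λ.MCE p q).Finite := by
  refine ((hΛ p q).image fun x => Λ.comp p x.1).subset ?_
  rintro τ ⟨hd, ⟨ρ, hρ, rfl⟩, ⟨σ, hσ, hc⟩⟩
  exact ⟨(ρ, σ), ⟨hρ, hσ, hc.symm, hd⟩, rfl⟩

/-- `MCE(p, q)` is `minCommonExt {p, q}`. -/
def minCommonExt (F : Finset Λ.Path) : Set Λ.Path :=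
  {τ | Λ.deg τ = F.sup Λ.deg ∧ ∀ a ∈ F, Λ.IsPrefix a τ}

theorem minCommonExt_singleton (a : Λ.Path) : minCommonExt {a} = {a} := by
  ext τ
  simp only [minCommonExt, Finset.sup_singleton, Finset.mem_singleton, forall_eq,
    Set.mem_ofPred_eq, Set.mem_singleton_iff]
  constructor
  · rintro ⟨hd, ha⟩
    exact ha.eq_of_deg_eq hd
  · rintro rfl
    exact ⟨rfl, IsPrefix.refl τ⟩

theorem minCommonExt_cons_subset {a : Λ.Path} {F : Finset Λ.Path} (ha : a ∉ F) :
    minCommonExt (F.cons a ha) ⊆ ⋃ σ ∈ minCommonExt F, Λ.MCE σ a := by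
  rintro τ ⟨hd, hτ⟩
  rw [Finset.sup_cons] at hd
  have hle : F.sup Λ.deg ≤ Λ.deg τ := hd ▸ le_sup_right
  obtain ⟨⟨σ, ρ⟩, ⟨hσρ, hdσ, -, hc⟩, -⟩ :=
    Λ.factorisation τ (F.sup Λ.deg) (Λ.deg τ - F.sup Λ.deg) (add_tsub_cancel_of_le hle).symm
  have hστ : Λ.IsPrefix σ τ := ⟨ρ, hσρ, hc⟩
  refine Set.mem_biUnion (x := σ) ⟨hdσ, fun b hb => ?_⟩ ⟨?_, hστ, hτ a (by simp)⟩
  · exact (hτ b (by simp [hb])).of_deg_le hστ (hdσ ▸ Finset.le_sup hb)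
  · rw [hd, hdσ, sup_comm]

theorem finite_minCommonExt (hΛ : Λ.FinitelyAligned) {F : Finset Λ.Path} (hF : F.Nonempty) :
    (minCommonExt F).Finite := by
  induction hF using Finset.Nonempty.cons_induction with
  | singleton a => simp [minCommonExt_singleton]
  | cons a F ha _ ih =>
    exact (ih.biUnion fun σ _ => finite_MCE hΛ σ a).subset (minCommonExt_cons_subset ha)

theorem exists_finset_superset_MCE_subset (hΛ : Λ.FinitelyAligned) (F : Finset Λ.Path) :
    ∃ E : Finset Λ.Path, F ⊆ E ∧ ∀ a ∈ E, ∀ b ∈ E, Λ.MCE a b ⊆ E := by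
  classical
  set I := F.powerset.filter Finset.Nonempty
  have hfin : (⋃ G ∈ (I : Set (Finset Λ.Path)), minCommonExt G).Finite :=
    I.finite_toSet.biUnion fun G hG => finite_minCommonExt hΛ (Finset.mem_filter.mp hG).2
  refine ⟨hfin.toFinset, fun a ha => ?_, fun a ha b hb τ hτ => ?_⟩
  · simp only [Set.Finite.mem_toFinset, Set.mem_iUnion]
    exact ⟨{a}, by simp [I, ha], by simp [minCommonExt_singleton]⟩
  · simp only [Set.Finite.coe_toFinset, Set.Finite.mem_toFinset, Set.mem_iUnion] at ha hb ⊢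
    obtain ⟨G, hG, hdG, haG⟩ := ha
    obtain ⟨H, hH, hdH, hbH⟩ := hb
    obtain ⟨hdτ, haτ, hbτ⟩ := hτ
    simp only [I, Finset.coe_filter, Finset.mem_powerset, Set.mem_ofPred_eq] at hG hH ⊢
    refine ⟨G ∪ H, ⟨Finset.union_subset hG.1 hH.1, hG.2.mono Finset.subset_union_left⟩,
      by rw [hdτ, hdG, hdH, Finset.sup_union], fun c hc => ?_⟩
    rcases Finset.mem_union.mp hc with hc | hc
    · exact (haG c hc).trans haτ
    · exact (hbH c hc).trans hbτ

theorem finite_tails (E : Finset Λ.Path) (lam : Λ.Path) :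
    {σ | Λ.src lam = Λ.rng σ ∧ Λ.deg σ ≠ 0 ∧ Λ.comp lam σ ∈ E}.Finite :=
  Set.Finite.of_finite_image (E.finite_toSet.subset (by rintro _ ⟨σ, ⟨-, -, h⟩, rfl⟩; exact h))
    fun _ hσ _ hσ' hc => comp_left_cancel hσ.1 hσ'.1 hc

noncomputable def tailsIn (E : Finset Λ.Path) (lam : Λ.Path) : Finset Λ.Path :=
  (finite_tails E lam).toFinset

theorem mem_tailsIn {E : Finset Λ.Path} {lam σ : Λ.Path} :
    σ ∈ Λ.tailsIn E lam ↔ Λ.src lam = Λ.rng σ ∧ Λ.deg σ ≠ 0 ∧ Λ.comp lam σ ∈ E :=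
  Set.Finite.mem_toFinset _

theorem exists_mem_forall_tailsIn_not {E : Finset Λ.Path} {P : Λ.Path → Prop}
    (h : ∃ lam ∈ E, P lam) : ∃ lam ∈ E, P lam ∧ ∀ σ ∈ Λ.tailsIn E lam, ¬P (Λ.comp lam σ) := by
  classical
  obtain ⟨lam, hlam, hmax⟩ := (E.filter P).exists_max_image (fun p => ∑ i, Λ.deg p i)
    (let ⟨lam, hlam, hP⟩ := h; ⟨lam, Finset.mem_filter.mpr ⟨hlam, hP⟩⟩)
  obtain ⟨hlamE, hP⟩ := Finset.mem_filter.mp hlam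
  refine ⟨lam, hlamE, hP, fun σ hσ hPσ => ?_⟩
  obtain ⟨hsrc, hσ₀, hσE⟩ := mem_tailsIn.mp hσ
  have hle := hmax _ (Finset.mem_filter.mpr ⟨hσE, hPσ⟩)
  simp only [Λ.deg_comp _ _ hsrc, Pi.add_apply, Finset.sum_add_distrib,
    add_le_iff_nonpos_right, nonpos_iff_eq_zero, Finset.sum_eq_zero_iff,
    Finset.mem_univ, true_implies] at hle
  exact hσ₀ (funext hle)

end KGraph

/-- `S_v ∏_{p ∈ F} (S_v - S_p S_{p*})`, the product of (KP4) over an enumeration of `F`. -/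
noncomputable def KGraph.gapProd {k : ℕ} {Λ : KGraph k} {A : Type} [NonUnitalRing A]
    (S T : Λ.Path → A) (v : Λ.Obj) (F : Finset Λ.Path) : A :=
  (F.toList.map fun p => S (Λ.vertex v) - S p * T p).foldl (· * ·) (S (Λ.vertex v))

namespace KGraph.IsKPFamily

variable {k : ℕ} {Λ : KGraph k} {A : Type} [NonUnitalRing A] {S T : Λ.Path → A}

theorem ghost_vertex (hfam : Λ.IsKPFamily S T) (v : Λ.Obj) :
    T (Λ.vertex v) = S (Λ.vertex v) :=
  hfam.1 v

theorem vertex_mul_self (hfam : Λ.IsKPFamily S T) (v : Λ.Obj) :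
    S (Λ.vertex v) * S (Λ.vertex v) = S (Λ.vertex v) :=
  hfam.2.1.1 v

theorem vertex_mul_vertex_of_ne (hfam : Λ.IsKPFamily S T) {v w : Λ.Obj} (h : v ≠ w) :
    S (Λ.vertex v) * S (Λ.vertex w) = 0 :=
  hfam.2.1.2 v w h

theorem mul_eq_comp (hfam : Λ.IsKPFamily S T) {p q : Λ.Path} (h : Λ.src p = Λ.rng q) :
    S p * S q = S (Λ.comp p q) :=
  (hfam.2.2.1 p q h).1

theorem ghost_mul_ghost_eq_comp (hfam : Λ.IsKPFamily S T) {p q : Λ.Path}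
    (h : Λ.src p = Λ.rng q) : T q * T p = T (Λ.comp p q) :=
  (hfam.2.2.1 p q h).2

theorem ghost_mul (hfam : Λ.IsKPFamily S T) (p q : Λ.Path) :
    T p * S q = ∑ᶠ x ∈ Λ.minPairs p q, S x.1 * T x.2 :=
  hfam.2.2.2.1 p q

theorem mul_vertex_src (hfam : Λ.IsKPFamily S T) (p : Λ.Path) :
    S p * S (Λ.vertex (Λ.src p)) = S p := by
  rw [hfam.mul_eq_comp (Λ.rng_vertex _).symm, Λ.comp_vertex]

theorem vertex_rng_mul (hfam : Λ.IsKPFamily S T) (p : Λ.Path) :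
    S (Λ.vertex (Λ.rng p)) * S p = S p := by
  rw [hfam.mul_eq_comp (Λ.src_vertex _), Λ.vertex_comp]

theorem ghost_mul_vertex_rng (hfam : Λ.IsKPFamily S T) (p : Λ.Path) :
    T p * S (Λ.vertex (Λ.rng p)) = T p := by
  rw [← hfam.ghost_vertex, hfam.ghost_mul_ghost_eq_comp (Λ.src_vertex _), Λ.vertex_comp]

theorem vertex_src_mul_ghost (hfam : Λ.IsKPFamily S T) (p : Λ.Path) :
    S (Λ.vertex (Λ.src p)) * T p = T p := by
  rw [← hfam.ghost_vertex, hfam.ghost_mul_ghost_eq_comp (Λ.rng_vertex _).symm, Λ.comp_vertex]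

theorem mul_eq_zero_of_src_ne (hfam : Λ.IsKPFamily S T) {p q : Λ.Path}
    (h : Λ.src p ≠ Λ.rng q) : S p * S q = 0 := by
  rw [← hfam.mul_vertex_src p, ← hfam.vertex_rng_mul q, mul_assoc,
    ← mul_assoc (S (Λ.vertex _)), hfam.vertex_mul_vertex_of_ne h, zero_mul, mul_zero]

theorem ghost_mul_ghost_eq_zero_of_src_ne (hfam : Λ.IsKPFamily S T) {p q : Λ.Path}
    (h : Λ.src p ≠ Λ.rng q) : T q * T p = 0 := by
  rw [← hfam.vertex_src_mul_ghost p, ← hfam.ghost_mul_vertex_rng q, mul_assoc,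
    ← mul_assoc (S _), hfam.vertex_mul_vertex_of_ne (Ne.symm h), zero_mul, mul_zero]

theorem ghost_mul_self (hfam : Λ.IsKPFamily S T) (p : Λ.Path) :
    T p * S p = S (Λ.vertex (Λ.src p)) := by
  rw [hfam.ghost_mul, minPairs_self, finsum_mem_singleton, hfam.ghost_vertex,
    hfam.vertex_mul_self]

theorem ghost_mul_eq_zero (hfam : Λ.IsKPFamily S T) {p q : Λ.Path}
    (h : Λ.minPairs p q = ∅) : T p * S q = 0 := by
  rw [hfam.ghost_mul, h, finsum_mem_empty]

theorem ghost_mul_eq_zero_of_deg_eq (hfam : Λ.IsKPFamily S T) {p q : Λ.Path}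
    (hd : Λ.deg p = Λ.deg q) (hne : p ≠ q) : T p * S q = 0 :=
  hfam.ghost_mul_eq_zero (minPairs_eq_empty_of_deg_eq hd hne)

theorem mul_ghost_mul_self (hfam : Λ.IsKPFamily S T) (p : Λ.Path) :
    S p * T p * S p = S p := by
  rw [mul_assoc, hfam.ghost_mul_self, hfam.mul_vertex_src]

theorem rangeProj_mul_self (hfam : Λ.IsKPFamily S T) (p : Λ.Path) :
    S p * T p * (S p * T p) = S p * T p := by
  rw [← mul_assoc, hfam.mul_ghost_mul_self]

theorem vertex_mul_rangeProj (hfam : Λ.IsKPFamily S T) {p : Λ.Path} {v : Λ.Obj}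
    (h : Λ.rng p = v) : S (Λ.vertex v) * (S p * T p) = S p * T p := by
  rw [← h, ← mul_assoc, hfam.vertex_rng_mul]

theorem ghost_mul_eq_sum (hΛ : Λ.FinitelyAligned) (hfam : Λ.IsKPFamily S T) (p q : Λ.Path) :
    T p * S q = ∑ x ∈ (hΛ p q).toFinset, S x.1 * T x.2 := by
  rw [hfam.ghost_mul]
  exact finsum_mem_eq_finite_toFinset_sum _ (hΛ p q)

theorem commute_vertex_rangeProj (hfam : Λ.IsKPFamily S T) {a : Λ.Path} {v : Λ.Obj}
    (h : Λ.rng a = v) : Commute (S (Λ.vertex v)) (S a * T a) := by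
  rw [Commute, SemiconjBy, hfam.vertex_mul_rangeProj h, ← h, mul_assoc,
    hfam.ghost_mul_vertex_rng]

theorem rangeProj_mul_rangeProj (hΛ : Λ.FinitelyAligned) (hfam : Λ.IsKPFamily S T)
    (a b : Λ.Path) :
    S a * T a * (S b * T b) =
      ∑ x ∈ (hΛ a b).toFinset, S (Λ.comp a x.1) * T (Λ.comp a x.1) := by
  rw [mul_assoc, ← mul_assoc (T a), hfam.ghost_mul_eq_sum hΛ, Finset.sum_mul, Finset.mul_sum]
  refine Finset.sum_congr rfl fun x hx => ?_
  obtain ⟨hρ, hτ, hc, -⟩ := (Set.Finite.mem_toFinset _).mp hx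
  rw [mul_assoc, ← mul_assoc (S a), hfam.mul_eq_comp hρ, hfam.ghost_mul_ghost_eq_comp hτ, hc]

theorem commute_rangeProj (hΛ : Λ.FinitelyAligned) (hfam : Λ.IsKPFamily S T) (a b : Λ.Path) :
    Commute (S a * T a) (S b * T b) := by
  rw [Commute, SemiconjBy, hfam.rangeProj_mul_rangeProj hΛ, hfam.rangeProj_mul_rangeProj hΛ]
  refine Finset.sum_nbij' Prod.swap Prod.swap (fun x hx => ?_) (fun x hx => ?_)
    (fun _ _ => rfl) (fun _ _ => rfl) (fun x hx => ?_)
  · simpa using swap_mem_minPairs ((Set.Finite.mem_toFinset _).mp hx)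
  · simpa using swap_mem_minPairs ((Set.Finite.mem_toFinset _).mp hx)
  · rw [Prod.fst_swap, ((Set.Finite.mem_toFinset _).mp hx).2.2.1]

theorem gapProd_eq_zero (hfam : Λ.IsKPFamily S T) {v : Λ.Obj} {F : Finset Λ.Path}
    (hF : Λ.FE v F) : gapProd S T v F = 0 :=
  hfam.2.2.2.2 v F.toList F.nodup_toList (by simpa using hF)

theorem exists_ghost_mul_gapProd_eq (hfam : Λ.IsKPFamily S T) {v : Λ.Obj} {F : Finset Λ.Path}
    (hF : ∀ σ ∈ F, Λ.rng σ = v ∧ σ ≠ Λ.vertex v) (h0 : gapProd S T v F ≠ 0) :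
    ∃ η, Λ.rng η = v ∧ T η * gapProd S T v F = T η := by
  have hnex : ¬Λ.Exhaustive v F := fun hex =>
    h0 (hfam.gapProd_eq_zero ⟨F.finite_toSet, hF, hex⟩)
  simp only [Exhaustive, not_forall, not_exists, not_and, Set.not_nonempty_iff_eq_empty,
    Finset.mem_coe, exists_prop] at hnex
  obtain ⟨η, hη, hηF⟩ := hnex
  have hηv : T η * S (Λ.vertex v) = T η := hη ▸ hfam.ghost_mul_vertex_rng η
  refine ⟨η, hη, List.mul_foldl_mul_of_mul_eq hηv ?_⟩
  simp only [List.mem_map, Finset.mem_toList]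
  rintro _ ⟨σ, hσ, rfl⟩
  rw [mul_sub, hηv, ← mul_assoc, hfam.ghost_mul_eq_zero (hηF σ hσ), zero_mul, sub_zero]

theorem gapProd_mul_vertex (hfam : Λ.IsKPFamily S T) {v : Λ.Obj} {F : Finset Λ.Path}
    (hF : ∀ σ ∈ F, Λ.rng σ = v) : gapProd S T v F * S (Λ.vertex v) = gapProd S T v F := by
  refine List.foldl_mul_mul_of_mul_eq_self (hfam.vertex_mul_self v) ?_
  simp only [List.mem_map, Finset.mem_toList]
  rintro _ ⟨σ, hσ, rfl⟩
  rw [sub_mul, hfam.vertex_mul_self, mul_assoc, ← hF σ hσ, hfam.ghost_mul_vertex_rng]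

theorem gapProd_mul_eq_zero (hΛ : Λ.FinitelyAligned) (hfam : Λ.IsKPFamily S T) {v : Λ.Obj}
    {F : Finset Λ.Path} (hF : ∀ σ ∈ F, Λ.rng σ = v) {σ : Λ.Path} (hσ : σ ∈ F) :
    gapProd S T v F * S σ = 0 := by
  have hv := hfam.commute_vertex_rangeProj (hF σ hσ)
  have h : gapProd S T v F * (S σ * T σ) = 0 := by
    refine List.foldl_mul_mul_eq_zero ?_ (Or.inr ⟨_, List.mem_map_of_mem
      (Finset.mem_toList.mpr hσ), ?_⟩)
    · simp only [List.mem_map, Finset.mem_toList]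
      rintro _ ⟨ρ, -, rfl⟩
      exact hv.sub_left (hfam.commute_rangeProj hΛ ρ σ)
    · rw [sub_mul, hfam.vertex_mul_rangeProj (hF σ hσ), hfam.rangeProj_mul_self, sub_self]
  rw [← hfam.mul_ghost_mul_self σ, ← mul_assoc, h, zero_mul]

end KGraph.IsKPFamily

theorem KGraph.gapProd_mul_of_forall {k : ℕ} {Λ : KGraph k} {A : Type} [NonUnitalRing A]
    {S T : Λ.Path → A} {v : Λ.Obj} {F : Finset Λ.Path} {y : A} (hy : S (Λ.vertex v) * y = y)
    (h : ∀ σ ∈ F, S σ * T σ * y = 0) : gapProd S T v F * y = y := by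
  refine List.foldl_mul_mul_of_mul_eq hy ?_
  simp only [List.mem_map, Finset.mem_toList]
  rintro _ ⟨σ, hσ, rfl⟩
  rw [sub_mul, hy, h σ hσ, sub_zero]

theorem KGraph.kpComponent_eq_span_image {k : ℕ} (Λ : KGraph k) (R : Type) [CommRing R]
    {A : Type} [NonUnitalRing A] [Module R A] (S T : Λ.Path → A) (n : Fin k → ℤ) :
    kpComponent Λ R S T n = Submodule.span R ((fun x : Λ.Path × Λ.Path => S x.1 * T x.2) ''
      {x | (fun i => (Λ.deg x.1 i : ℤ) - (Λ.deg x.2 i : ℤ)) = n}) := by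
  unfold kpComponent
  congr 1
  ext b
  simp [eq_comm]

namespace KGraph.IsKPFamily

variable {k : ℕ} {Λ : KGraph k} {R : Type} [CommRing R] {A : Type} [NonUnitalRing A]
  [Module R A] {S T : Λ.Path → A}

theorem mem_kpComponent (hfam : Λ.IsKPFamily S T) (p : Λ.Path) :
    S p ∈ kpComponent Λ R S T fun i => (Λ.deg p i : ℤ) := by
  rw [← hfam.mul_vertex_src p, ← hfam.ghost_vertex]
  exact Submodule.subset_span ⟨p, _, by simp [Λ.deg_vertex], rfl⟩

theorem ghost_mem_kpComponent (hfam : Λ.IsKPFamily S T) (q : Λ.Path) :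
    T q ∈ kpComponent Λ R S T fun i => -(Λ.deg q i : ℤ) := by
  rw [← hfam.vertex_src_mul_ghost q]
  exact Submodule.subset_span ⟨_, q, by simp [Λ.deg_vertex], rfl⟩

theorem mul_mem_kpComponent_of_generators (hΛ : Λ.FinitelyAligned) (hfam : Λ.IsKPFamily S T)
    {p q ρ τ : Λ.Path} :
    S p * T q * (S ρ * T τ) ∈ kpComponent Λ R S T
      ((fun i => (Λ.deg p i : ℤ) - Λ.deg q i) + fun i => (Λ.deg ρ i : ℤ) - Λ.deg τ i) := by
  rw [mul_assoc, ← mul_assoc (T q), hfam.ghost_mul_eq_sum hΛ, Finset.sum_mul, Finset.mul_sum]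
  refine Submodule.sum_mem _ fun x hx => ?_
  obtain ⟨hq, hρ, hc, -⟩ := (Set.Finite.mem_toFinset _).mp hx
  simp only [← mul_assoc]
  rw [mul_assoc (S p * S x.1)]
  by_cases hp : Λ.src p = Λ.rng x.1
  · by_cases hτ : Λ.src τ = Λ.rng x.2
    · rw [hfam.mul_eq_comp hp, hfam.ghost_mul_ghost_eq_comp hτ]
      refine Submodule.subset_span ⟨_, _, funext fun i => ?_, rfl⟩
      have h₁ := congrFun (Λ.deg_comp _ _ hp) i
      have h₂ := congrFun (Λ.deg_comp _ _ hτ) i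
      have h₃ := congrFun (Λ.deg_comp _ _ hq) i
      have h₄ := congrFun (Λ.deg_comp _ _ hρ) i
      have h₅ := congrFun (congrArg Λ.deg hc) i
      simp only [Pi.add_apply] at h₁ h₂ h₃ h₄ h₅ ⊢
      omega
    · rw [hfam.ghost_mul_ghost_eq_zero_of_src_ne hτ, mul_zero]
      exact zero_mem _
  · rw [hfam.mul_eq_zero_of_src_ne hp, zero_mul]
    exact zero_mem _

variable [SMulCommClass R A A] [IsScalarTower R A A]

theorem mul_mem_kpComponent (hΛ : Λ.FinitelyAligned) (hfam : Λ.IsKPFamily S T)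
    {n m : Fin k → ℤ} {a b : A} (ha : a ∈ kpComponent Λ R S T n)
    (hb : b ∈ kpComponent Λ R S T m) : a * b ∈ kpComponent Λ R S T (n + m) := by
  induction ha using Submodule.span_induction with
  | mem a ha =>
    obtain ⟨p, q, rfl, rfl⟩ := ha
    induction hb using Submodule.span_induction with
    | mem b hb =>
      obtain ⟨ρ, τ, rfl, rfl⟩ := hb
      exact hfam.mul_mem_kpComponent_of_generators hΛ
    | zero => simp
    | add b b' _ _ hb hb' => rw [mul_add]; exact add_mem hb hb'
    | smul r b _ hb => rw [mul_smul_comm]; exact Submodule.smul_mem _ r hb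
  | zero => simp
  | add a a' _ _ ha ha' => rw [add_mul]; exact add_mem ha ha'
  | smul r a _ ha => rw [smul_mul_assoc]; exact Submodule.smul_mem _ r ha

theorem iSup_kpComponent_eq_top (hΛ : Λ.FinitelyAligned) (hfam : Λ.IsKPFamily S T)
    (hgen : NonUnitalAlgebra.adjoin R (Set.range S ∪ Set.range T) = ⊤) :
    ⨆ n, kpComponent Λ R S T n = ⊤ := by
  have hhom : ∀ x ∈ Subsemigroup.closure (Set.range S ∪ Set.range T),
      ∃ n, x ∈ kpComponent Λ R S T n := by
    intro x hx
    induction hx using Subsemigroup.closure_induction with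
    | mem x hx =>
      rcases hx with ⟨p, rfl⟩ | ⟨q, rfl⟩
      exacts [⟨_, hfam.mem_kpComponent p⟩, ⟨_, hfam.ghost_mem_kpComponent q⟩]
    | mul x y _ _ hx hy =>
      obtain ⟨n, hx⟩ := hx
      obtain ⟨m, hy⟩ := hy
      exact ⟨n + m, hfam.mul_mem_kpComponent hΛ hx hy⟩
  rw [eq_top_iff]
  intro x _
  have hx : x ∈ (NonUnitalAlgebra.adjoin R (Set.range S ∪ Set.range T)).toSubmodule := by
    rw [hgen]
    trivial
  rw [NonUnitalAlgebra.adjoin_eq_span] at hx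
  refine Submodule.span_le.mpr (fun y hy => ?_) hx
  obtain ⟨n, hn⟩ := hhom y hy
  exact Submodule.mem_iSup_of_mem n hn

end KGraph.IsKPFamily

namespace KGraph.IsKPFamily

variable {k : ℕ} {Λ : KGraph k} {R : Type} [CommRing R] {A : Type} [NonUnitalRing A]
  [Module R A] {S T : Λ.Path → A}

theorem sum_vertex_mul (hfam : Λ.IsKPFamily S T) {V : Finset Λ.Obj} {p : Λ.Path}
    (hp : Λ.rng p ∈ V) : ∑ v ∈ V, S (Λ.vertex v) * S p = S p := by
  rw [Finset.sum_eq_single_of_mem _ hp fun v _ hv => ?_, hfam.vertex_rng_mul]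
  rw [← hfam.vertex_rng_mul p, ← mul_assoc, hfam.vertex_mul_vertex_of_ne hv, zero_mul]

theorem exists_vertex_mul_ne_zero [SMulCommClass R A A] (hfam : Λ.IsKPFamily S T) {c : Λ.Path × Λ.Path →₀ R}
    (h : Finsupp.linearCombination R (fun x => S x.1 * T x.2) c ≠ 0) :
    ∃ x ∈ c.support,
      S (Λ.vertex (Λ.rng x.1)) * Finsupp.linearCombination R (fun x => S x.1 * T x.2) c ≠ 0 := by
  classical
  by_contra! h0
  refine h ?_
  set V := c.support.image fun x => Λ.rng x.1
  calc Finsupp.linearCombination R (fun x => S x.1 * T x.2) c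
      = ∑ v ∈ V, S (Λ.vertex v) * Finsupp.linearCombination R (fun x => S x.1 * T x.2) c := by
        simp only [Finsupp.linearCombination_apply, Finsupp.sum, Finset.mul_sum, mul_smul_comm]
        rw [Finset.sum_comm]
        refine Finset.sum_congr rfl fun x hx => ?_
        rw [← Finset.smul_sum]
        simp only [← mul_assoc]
        rw [← Finset.sum_mul, hfam.sum_vertex_mul (V := V) (Finset.mem_image_of_mem (fun x => Λ.rng x.1) hx)]
    _ = 0 := Finset.sum_eq_zero fun v hv => by
        obtain ⟨x, hx, rfl⟩ := Finset.mem_image.mp hv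
        exact h0 x hx

/-- Ghost elements `T δ` of paths of a common degree behave like matrix units: `T δ S δ'`
is `S_{s(δ)}` or `0`. -/
theorem exists_mul_eq_smul_of_mem_span [IsScalarTower R A A] (hfam : Λ.IsKPFamily S T) {a z : A} {v : Λ.Obj}
    {D : Set Λ.Path} (hsrc : ∀ δ ∈ D, Λ.src δ = v)
    (hdeg : ∀ δ ∈ D, ∀ δ' ∈ D, Λ.deg δ = Λ.deg δ') (ha : a * S (Λ.vertex v) = a)
    (hz : z ∈ Submodule.span R ((fun δ => a * T δ) '' D)) (hz0 : z ≠ 0) :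
    ∃ (δ : Λ.Path) (r : R), z * S δ = r • a ∧ r • a ≠ 0 := by
  obtain ⟨c, hc, rfl⟩ := (Finsupp.mem_span_image_iff_linearCombination R).mp hz
  have hcol : ∀ δ ∈ D,
      Finsupp.linearCombination R (fun δ => a * T δ) c * S δ = c δ • a := by
    intro δ hδ
    rw [Finsupp.linearCombination_apply, Finsupp.sum, Finset.sum_mul, Finset.sum_eq_single δ]
    · rw [smul_mul_assoc, mul_assoc, hfam.ghost_mul_self, hsrc δ hδ, ha]
    · intro δ' hδ' hne
      rw [smul_mul_assoc, mul_assoc,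
        hfam.ghost_mul_eq_zero_of_deg_eq (hdeg _ (hc hδ') _ hδ) hne, mul_zero, smul_zero]
    · intro hδ'
      rw [Finsupp.notMem_support_iff.mp hδ', zero_smul, zero_mul]
  by_contra! h
  refine hz0 ?_
  rw [Finsupp.linearCombination_apply]
  refine Finset.sum_eq_zero fun δ hδ => ?_
  dsimp only
  rw [← smul_mul_assoc, h δ (c δ) (hcol δ (hc hδ)), zero_mul]

end KGraph.IsKPFamily

namespace KGraph.IsKPFamily

variable {k : ℕ} {Λ : KGraph k} {R : Type} [CommRing R] {A : Type} [NonUnitalRing A]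
  [Module R A] {S T : Λ.Path → A}

theorem gapProd_mul_ghost_mul_mem_span (hΛ : Λ.FinitelyAligned) (hfam : Λ.IsKPFamily S T)
    {E : Finset Λ.Path} (hE : ∀ a ∈ E, ∀ b ∈ E, Λ.MCE a b ⊆ E) {lam μ ν : Λ.Path}
    (hlam : lam ∈ E) (hμ : μ ∈ E) {n : Fin k → ℤ}
    (hn : (fun i => (Λ.deg μ i : ℤ) - (Λ.deg ν i : ℤ)) = n) :
    gapProd S T (Λ.src lam) (Λ.tailsIn E lam) * (T lam * (S μ * T ν)) ∈
      Submodule.span R ((fun δ => gapProd S T (Λ.src lam) (Λ.tailsIn E lam) * T δ) ''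
        {δ | Λ.src δ = Λ.src lam ∧ ∀ i, (Λ.deg δ i : ℤ) = Λ.deg lam i - n i}) := by
  have htails : ∀ σ ∈ Λ.tailsIn E lam, Λ.rng σ = Λ.src lam :=
    fun σ hσ => (mem_tailsIn.mp hσ).1.symm
  rw [← mul_assoc (T lam), hfam.ghost_mul_eq_sum hΛ, Finset.sum_mul, Finset.mul_sum]
  refine Submodule.sum_mem _ fun y hy => ?_
  obtain ⟨hρ, hτ, hc, -⟩ := (Set.Finite.mem_toFinset _).mp hy
  by_cases hρ0 : Λ.deg y.1 = 0
  · have hlamτ : Λ.comp μ y.2 = lam := by rw [← hc, comp_eq_self_of_deg_eq_zero hρ hρ0]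
    have hsrc : Λ.src y.2 = Λ.src lam := by rw [← hlamτ, Λ.src_comp _ _ hτ]
    have hv : S (Λ.vertex (Λ.src lam)) * T y.2 = T y.2 := hsrc ▸ hfam.vertex_src_mul_ghost y.2
    rw [eq_vertex_src_of_deg_eq_zero hρ hρ0, mul_assoc, ← mul_assoc _ (T y.2), hv]
    by_cases hν : Λ.src ν = Λ.rng y.2
    · rw [hfam.ghost_mul_ghost_eq_comp hν]
      refine Submodule.subset_span ⟨Λ.comp ν y.2, ⟨by rw [Λ.src_comp _ _ hν, hsrc], fun i => ?_⟩, rfl⟩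
      have h₁ := congrFun (Λ.deg_comp _ _ hν) i
      have h₂ := congrFun (congrArg Λ.deg hlamτ) i
      have h₃ := congrFun hn i
      rw [Λ.deg_comp _ _ hτ] at h₂
      simp only [Pi.add_apply] at h₁ h₂ h₃
      omega
    · rw [hfam.ghost_mul_ghost_eq_zero_of_src_ne hν, mul_zero]
      exact zero_mem _
  · have hmem : y.1 ∈ Λ.tailsIn E lam :=
      mem_tailsIn.mpr ⟨hρ, hρ0, hE lam hlam μ hμ (comp_mem_MCE ((Set.Finite.mem_toFinset _).mp hy))⟩
    rw [← mul_assoc, ← mul_assoc, hfam.gapProd_mul_eq_zero hΛ htails hmem, zero_mul, zero_mul]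
    exact zero_mem _

theorem ghost_mul_mem_span_of_forall_tailsIn [SMulCommClass R A A] [IsScalarTower R A A]
    (hΛ : Λ.FinitelyAligned) (hfam : Λ.IsKPFamily S T) {E : Finset Λ.Path}
    (hE : ∀ a ∈ E, ∀ b ∈ E, Λ.MCE a b ⊆ E) {lam : Λ.Path} (hlam : lam ∈ E) {n : Fin k → ℤ}
    {x : A} (hx : x ∈ Submodule.span R ((fun p : Λ.Path × Λ.Path => S p.1 * T p.2) ''
      {p | p.1 ∈ E ∧ (fun i => (Λ.deg p.1 i : ℤ) - Λ.deg p.2 i) = n}))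
    (hmax : ∀ σ ∈ Λ.tailsIn E lam, T (Λ.comp lam σ) * x = 0) :
    T lam * x ∈ Submodule.span R ((fun δ => gapProd S T (Λ.src lam) (Λ.tailsIn E lam) * T δ) ''
      {δ | Λ.src δ = Λ.src lam ∧ ∀ i, (Λ.deg δ i : ℤ) = Λ.deg lam i - n i}) := by
  rw [← gapProd_mul_of_forall (F := Λ.tailsIn E lam) (y := T lam * x) (by rw [← mul_assoc, hfam.vertex_src_mul_ghost]) fun σ hσ => by
    rw [mul_assoc, ← mul_assoc (T σ), hfam.ghost_mul_ghost_eq_comp (mem_tailsIn.mp hσ).1,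
      hmax σ hσ, mul_zero]]
  clear hmax
  induction hx using Submodule.span_induction with
  | mem y hy =>
    obtain ⟨⟨μ, ν⟩, ⟨hμ, hn⟩, rfl⟩ := hy
    exact hfam.gapProd_mul_ghost_mul_mem_span hΛ hE hlam hμ hn
  | zero => simp
  | add y z _ _ hy hz => rw [mul_add, mul_add]; exact add_mem hy hz
  | smul r y _ hy => rw [mul_smul_comm, mul_smul_comm]; exact Submodule.smul_mem _ r hy

theorem exists_mul_mul_eq_smul_vertex [SMulCommClass R A A] [IsScalarTower R A A]
    (hΛ : Λ.FinitelyAligned) (hfam : Λ.IsKPFamily S T)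
    {n : Fin k → ℤ} {x : A} (hx : x ∈ kpComponent Λ R S T n) (hx0 : x ≠ 0) :
    ∃ (a b : A) (r : R) (v : Λ.Obj), r ≠ 0 ∧ a * x * b = r • S (Λ.vertex v) := by
  classical
  rw [kpComponent_eq_span_image, Finsupp.mem_span_image_iff_linearCombination] at hx
  obtain ⟨c, hc, rfl⟩ := hx
  obtain ⟨E, hFE, hE⟩ := exists_finset_superset_MCE_subset hΛ
    (c.support.image Prod.fst ∪ c.support.image fun x => Λ.vertex (Λ.rng x.1))
  obtain ⟨y, hy, hvy⟩ := hfam.exists_vertex_mul_ne_zero hx0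
  set x := Finsupp.linearCombination R (fun x => S x.1 * T x.2) c
  obtain ⟨lam, hlamE, hlam, hmax⟩ := exists_mem_forall_tailsIn_not (P := fun lam => T lam * x ≠ 0)
    ⟨_, hFE (Finset.mem_union_right _ (Finset.mem_image_of_mem _ hy)), by rwa [hfam.ghost_vertex]⟩
  simp only [not_not] at hmax
  have htails : ∀ σ ∈ Λ.tailsIn E lam, Λ.rng σ = Λ.src lam :=
    fun σ hσ => (mem_tailsIn.mp hσ).1.symm
  obtain ⟨δ, r, hδ, hr⟩ := hfam.exists_mul_eq_smul_of_mem_span (fun δ hδ => hδ.1)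
    (fun δ hδ δ' hδ' => funext fun i => by have := hδ.2 i; have := hδ'.2 i; omega)
    (hfam.gapProd_mul_vertex htails)
    (hfam.ghost_mul_mem_span_of_forall_tailsIn hΛ hE hlamE
      ((Finsupp.mem_span_image_iff_linearCombination R).mpr ⟨c, fun p hp =>
        ⟨hFE (Finset.mem_union_left _ (Finset.mem_image_of_mem _ hp)), hc hp⟩, rfl⟩) hmax) hlam
  obtain ⟨η, hη, hηG⟩ := hfam.exists_ghost_mul_gapProd_eq
    (fun σ hσ => ⟨htails σ hσ, fun h => (mem_tailsIn.mp hσ).2.1 (h ▸ Λ.deg_vertex _)⟩)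
    fun h => hr (by rw [h, smul_zero])
  refine ⟨T η * T lam, S δ * S η, r, Λ.src η, fun h => hr (by rw [h, zero_smul]), ?_⟩
  calc T η * T lam * x * (S δ * S η) = T η * (T lam * x * S δ) * S η := by simp only [mul_assoc]
    _ = r • (T η * gapProd S T (Λ.src lam) (Λ.tailsIn E lam) * S η) := by
        rw [hδ, mul_smul_comm, smul_mul_assoc]
    _ = r • S (Λ.vertex (Λ.src η)) := by rw [hηG, hfam.ghost_mul_self]

end KGraph.IsKPFamily

theorem injective_of_homogeneous_ker_trivial {ι R B A F : Type*} [Semiring R] [AddCommGroup B]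
    [Module R B] [AddCommGroup A] [Module R A] [FunLike F B A] [AddMonoidHomClass F B A]
    {M : ι → Submodule R B} (hM : ⨆ i, M i = ⊤) {N : ι → Submodule R A}
    (hN : ∀ c : ι →₀ A, (∀ i, c i ∈ N i) → (c.sum fun _ a => a) = 0 → c = 0)
    (f : F) (hf : ∀ i, ∀ x ∈ M i, f x ∈ N i) (hker : ∀ i, ∀ x ∈ M i, f x = 0 → x = 0) :
    Function.Injective f := by
  refine (injective_iff_map_eq_zero f).mpr fun x hx => ?_
  obtain ⟨g, hg, rfl⟩ := (Submodule.mem_iSup_iff_exists_finsupp M x).mp (hM ▸ Submodule.mem_top)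
  have hfg : g.mapRange f (map_zero f) = 0 := hN _ (fun i => hf i _ (hg i)) (by
    rw [Finsupp.sum_mapRange_index fun _ => rfl, ← hx, Finsupp.sum, Finsupp.sum, map_sum])
  have hg0 : g = 0 := Finsupp.ext fun i =>
    hker i _ (hg i) (by simpa using DFunLike.congr_fun hfg i)
  rw [hg0, Finsupp.sum_zero_index]

theorem graded_uniqueness_general {k : ℕ} (Λ : KGraph k)
    (hΛ : Λ.FinitelyAligned) (R : Type) [CommRing R]
    (B : Type) [NonUnitalRing B] [Module R B] [SMulCommClass R B B]
    [IsScalarTower R B B] (s t : Λ.Path → B)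
    (hU : Λ.IsUniversalKP R B s t)
    (A : Type) [NonUnitalRing A] [Module R A] (𝒜 : (Fin k → ℤ) → Submodule R A)
    (hAgr : ∀ a : A, ∃! c : (Fin k → ℤ) →₀ A,
      (∀ n, c n ∈ 𝒜 n) ∧ (c.sum fun _ x => x) = a)
    (π : B →ₙₐ[R] A)
    (hπgr : ∀ (n : Fin k → ℤ) (x : B), x ∈ kpComponent Λ R s t n → π x ∈ 𝒜 n)
    (hπv : ∀ r : R, r ≠ 0 → ∀ v, π (r • s (Λ.vertex v)) ≠ 0) :
    Function.Injective π := by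
  obtain ⟨hfam, hgen, -⟩ := hU
  refine injective_of_homogeneous_ker_trivial (hfam.iSup_kpComponent_eq_top hΛ hgen)
    (fun c hc hsum => (hAgr 0).unique ⟨hc, hsum⟩ ⟨fun _ => zero_mem _, Finsupp.sum_zero_index⟩)
    π hπgr fun n x hx hπx => ?_
  by_contra hx0
  obtain ⟨a, b, r, v, hr, habx⟩ := hfam.exists_mul_mul_eq_smul_vertex hΛ hx hx0
  exact hπv r hr v (by rw [← habx, map_mul, map_mul, hπx, mul_zero, zero_mul])

/-- graded uniqueness theorem: a `ℤᵏ`-graded homomorphism out of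
`KP_R(Λ)` which is nonzero on all `r • s_v` is injective. -/
theorem graded_uniqueness {k : ℕ} (hk : 0 < k) (Λ : KGraph k)
    (hΛ : Λ.FinitelyAligned) (R : Type) [CommRing R]
    (B : Type) [NonUnitalRing B] [Module R B] [SMulCommClass R B B]
    [IsScalarTower R B B] (s t : Λ.Path → B)
    (hU : Λ.IsUniversalKP R B s t)
    (A : Type) [NonUnitalRing A] [Module R A] [SMulCommClass R A A]
    [IsScalarTower R A A] (𝒜 : (Fin k → ℤ) → Submodule R A)
    (hAgr : ∀ a : A, ∃! c : (Fin k → ℤ) →₀ A,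
      (∀ n, c n ∈ 𝒜 n) ∧ (c.sum fun _ x => x) = a)
    (hAmul : ∀ (n m : Fin k → ℤ) (a b : A), a ∈ 𝒜 n → b ∈ 𝒜 m →
      a * b ∈ 𝒜 (n + m))
    (π : B →ₙₐ[R] A)
    (hπgr : ∀ (n : Fin k → ℤ) (x : B), x ∈ kpComponent Λ R s t n → π x ∈ 𝒜 n)
    (hπv : ∀ r : R, r ≠ 0 → ∀ v, π (r • s (Λ.vertex v)) ≠ 0) :
    Function.Injective π :=
  graded_uniqueness_general Λ hΛ R B s t hU A 𝒜 hAgr π hπgr hπv
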